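/- If R is a finite commutative local ring with maximal ideal m ≠ 0 and residue field F with |F| ≥ 4, then the longest induced path in the Jacobson graph of R has length 2, and the longest induced cycle has length 4. -/

import Mathlib

open scoped Classical

/-- The Jacobson graph of a commutative ring `R`. -/
def jacobsonGraph (R : Type*) [CommRing R] :
    SimpleGraph {x : R // x ∉ Ideal.jacobson (⊥ : Ideal R)} where
  Adj x y := x ≠ y ∧ ¬ IsUnit (1 - (x : R) * y)
  symm := by
    refine ⟨?_⟩
    rintro x y ⟨h1, h2⟩
    exact ⟨h1.symm, by rwa [mul_comm] at h2⟩
  loopless := ⟨fun x ⟨h, _⟩ => h rfl⟩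

/-- An induced (chordless) cycle in a simple graph. -/
def IsInducedCycle {V : Type*} {G : SimpleGraph V} {u : V} (p : G.Walk u u) : Prop :=
  p.IsCycle ∧ ∀ x ∈ p.support, ∀ y ∈ p.support, G.Adj x y → s(x, y) ∈ p.edges

/-- An induced (chordless) path in a simple graph. -/
def IsInducedPath {V : Type*} {G : SimpleGraph V} {u v : V} (p : G.Walk u v) : Prop :=
  p.IsPath ∧ ∀ x ∈ p.support, ∀ y ∈ p.support, G.Adj x y → s(x, y) ∈ p.edges

/-!
In a local ring, `1 - x * y` is a non-unit exactly when `x̄ * ȳ = 1` in the residue field, so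
adjacency in the Jacobson graph only depends on residues. Hence if `a - b - c - d` is a walk then
`ā = c̄` and `a` is adjacent to `d` unless `a = d`: no induced path has three edges, and no
induced cycle has five or more. Conversely, choosing `α ∈ F` with `α ≠ 0` and `α² ≠ 1` (possible
as `|F| ≥ 4`) and a nonzero `t ∈ m`, lifts `a, b` of `α, α⁻¹` give the induced 4-cycle
`a - b - (a + t) - (b + t) - a`, which contains an induced path of length 2.
-/

namespace SimpleGraph

variable {V : Type*} {G : SimpleGraph V}

def ThreeWalkClosed (G : SimpleGraph V) : Prop :=
  ∀ ⦃a b c d : V⦄, G.Adj a b → G.Adj b c → G.Adj c d → a ≠ d → G.Adj a d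

namespace Walk

theorem IsPath.adj_getVert_three (hG : G.ThreeWalkClosed) {u v : V} {p : G.Walk u v}
    (hp : p.IsPath) (h : 3 ≤ p.length) : G.Adj u (p.getVert 3) := by
  have hne : p.getVert 0 ≠ p.getVert 3 := fun h03 => by
    have := hp.getVert_injOn (by omega : 0 ≤ p.length) h h03
    omega
  simpa using hG (p.adj_getVert_succ (i := 0) (by omega)) (p.adj_getVert_succ (i := 1) (by omega))
    (p.adj_getVert_succ (i := 2) (by omega)) hne

theorem IsPath.getVert_three_ne_snd {u v : V} {p : G.Walk u v} (hp : p.IsPath)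
    (h : 3 ≤ p.length) : p.getVert 3 ≠ p.snd := fun h31 => by
  have := hp.getVert_injOn h (by omega : 1 ≤ p.length) h31
  omega

end Walk

open Walk

theorem exists_isInducedPath_length_two {a b c : V} (hab : G.Adj a b) (hbc : G.Adj b c)
    (hac : a ≠ c) (hnac : ¬ G.Adj a c) :
    ∃ p : G.Walk a c, IsInducedPath p ∧ p.length = 2 := by
  refine ⟨.cons hab (.cons hbc .nil), ⟨?_, ?_⟩, rfl⟩
  · simp [hab.ne, hbc.ne, hac]
  · intro x hx y hy hxy
    simp only [support_cons, support_nil, List.mem_cons, List.not_mem_nil, or_false] at hx hy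
    rcases hx with rfl | rfl | rfl <;> rcases hy with rfl | rfl | rfl <;>
      simp_all [hxy.ne, G.adj_comm]

theorem exists_isInducedCycle_length_four {a b c d : V} (hab : G.Adj a b) (hbc : G.Adj b c)
    (hcd : G.Adj c d) (hda : G.Adj d a) (hac : a ≠ c) (hnac : ¬ G.Adj a c) (hbd : b ≠ d)
    (hnbd : ¬ G.Adj b d) :
    ∃ p : G.Walk a a, IsInducedCycle p ∧ p.length = 4 := by
  refine ⟨.cons hab (.cons hbc (.cons hcd (.cons hda .nil))), ⟨?_, ?_⟩, rfl⟩
  · rw [cons_isCycle_iff]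
    simp [hab.ne, hbc.ne, hcd.ne, hda.ne, hab.ne.symm, hda.ne.symm, hac, hac.symm, hbd]
  · intro x hx y hy hxy
    simp only [support_cons, support_nil, List.mem_cons, List.not_mem_nil, or_false] at hx hy
    rcases hx with rfl | rfl | rfl | rfl | rfl <;> rcases hy with rfl | rfl | rfl | rfl | rfl <;>
      simp_all [hxy.ne, G.adj_comm]

end SimpleGraph

section InducedBounds

open SimpleGraph Walk

variable {V : Type*} {G : SimpleGraph V}

theorem IsInducedPath.length_le_two (hG : G.ThreeWalkClosed) {u v : V} {p : G.Walk u v}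
    (hp : IsInducedPath p) : p.length ≤ 2 := by
  by_contra! h
  have hchord := hp.2 u p.start_mem_support _ (p.getVert_mem_support 3)
    (hp.1.adj_getVert_three hG h)
  exact hp.1.getVert_three_ne_snd h (hp.1.eq_snd_of_mem_edges hchord)

theorem IsInducedCycle.length_le_four (hG : G.ThreeWalkClosed) {u : V} {p : G.Walk u u}
    (hp : IsInducedCycle p) : p.length ≤ 4 := by
  by_contra! h
  have hnil := hp.1.not_nil
  have htail := hp.1.isPath_tail
  have hlen : 4 ≤ p.tail.length := by rw [length_tail]; omega
  have hchord := hp.2 _ (p.getVert_mem_support 1) _ (p.getVert_mem_support 4)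
    (by simpa using htail.adj_getVert_three hG (by omega))
  have hedges : p.edges = s(u, p.snd) :: p.tail.edges := by
    rw [← edges_cons (p.adj_snd hnil), p.cons_tail_eq hnil]
  rw [hedges, List.mem_cons] at hchord
  rcases hchord with hchord | hchord
  · have h4 : p.tail.getVert 3 ≠ u := by
      rw [Ne, htail.getVert_eq_end_iff (by omega)]
      omega
    rw [getVert_tail] at h4
    rcases Sym2.eq_iff.mp hchord with ⟨h1u, -⟩ | ⟨-, h4u⟩
    · exact (p.adj_snd hnil).ne h1u.symm
    · exact h4 h4u
  · have := htail.eq_snd_of_mem_edges hchord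
    exact htail.getVert_three_ne_snd (by omega) (by simpa using this)

end InducedBounds

theorem exists_ne_zero_mul_self_ne_one {F : Type*} [Ring F] [NoZeroDivisors F]
    (hF : 4 ≤ Nat.card F) : ∃ α : F, α ≠ 0 ∧ α * α ≠ 1 := by
  by_contra! h
  have hsub : (Set.univ : Set F) ⊆ {0, 1, -1} := fun α _ => by
    by_cases hα : α = 0
    · simp [hα]
    · simpa [hα] using mul_self_eq_one_iff.mp (h α hα)
  have := Set.ncard_le_ncard hsub
  have := Set.ncard_insert_le (0 : F) {1, -1}
  have := Set.ncard_insert_le (1 : F) {-1}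
  rw [Set.ncard_univ, Set.ncard_singleton] at *
  omega

namespace IsLocalRing

variable {R : Type*} [CommRing R] [IsLocalRing R]

theorem notMem_jacobson_bot_iff_residue_ne_zero {x : R} :
    x ∉ Ideal.jacobson (⊥ : Ideal R) ↔ residue R x ≠ 0 := by
  rw [jacobson_eq_maximalIdeal ⊥ bot_ne_top, Ne, residue_eq_zero_iff]

theorem jacobsonGraph_adj_iff {x y : {x : R // x ∉ Ideal.jacobson (⊥ : Ideal R)}} :
    (jacobsonGraph R).Adj x y ↔ x ≠ y ∧ residue R x * residue R y = 1 := by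
  refine and_congr_right fun _ => ?_
  rw [← mem_nonunits_iff, ← mem_maximalIdeal, ← residue_eq_zero_iff, map_sub, map_one, map_mul,
    sub_eq_zero, eq_comm]

theorem jacobsonGraph_threeWalkClosed : (jacobsonGraph R).ThreeWalkClosed := by
  intro a b c d hab hbc hcd had
  rw [jacobsonGraph_adj_iff] at *
  refine ⟨had, ?_⟩
  calc residue R a * residue R d
      = residue R a * (residue R b * residue R c) * residue R d := by rw [hbc.2, mul_one]
    _ = (residue R a * residue R b) * (residue R c * residue R d) := by ring
    _ = 1 := by rw [hab.2, hcd.2, mul_one]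

theorem jacobsonGraph_exists_chordless_square (hm : maximalIdeal R ≠ ⊥)
    (hF : 4 ≤ Nat.card (ResidueField R)) :
    ∃ a b c d, (jacobsonGraph R).Adj a b ∧ (jacobsonGraph R).Adj b c ∧
      (jacobsonGraph R).Adj c d ∧ (jacobsonGraph R).Adj d a ∧
      a ≠ c ∧ ¬ (jacobsonGraph R).Adj a c ∧ b ≠ d ∧ ¬ (jacobsonGraph R).Adj b d := by
  obtain ⟨α, hα0, hαα⟩ := exists_ne_zero_mul_self_ne_one hF
  obtain ⟨t, htm, ht0⟩ := (Submodule.ne_bot_iff _).mp hm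
  obtain ⟨a, rfl⟩ := residue_surjective α
  obtain ⟨b, hb⟩ := residue_surjective (residue R a)⁻¹
  have hb0 : residue R b ≠ 0 := hb ▸ inv_ne_zero hα0
  have hab : residue R a * residue R b = 1 := by rw [hb, mul_inv_cancel₀ hα0]
  have hbb : residue R b * residue R b ≠ 1 := by rwa [hb, ← mul_inv, Ne, inv_eq_one]
  have hres (x : R) : residue R (x + t) = residue R x := by
    rw [map_add, (residue_eq_zero_iff t).mpr htm, add_zero]
  have hne_ab : a ≠ b := fun h => hαα (by rwa [← h] at hab)
  have hne_ba' : b ≠ a + t := fun h => hαα (by rwa [h, hres] at hab)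
  have hne_b'a : b + t ≠ a := fun h => hbb (by rwa [← h, hres] at hab)
  let v (x : R) (hx : residue R x ≠ 0) : {x : R // x ∉ Ideal.jacobson (⊥ : Ideal R)} :=
    ⟨x, notMem_jacobson_bot_iff_residue_ne_zero.mpr hx⟩
  refine ⟨v a hα0, v b hb0, v (a + t) (by rwa [hres]), v (b + t) (by rwa [hres]), ?_⟩
  simp [v, jacobsonGraph_adj_iff, hres, hab, mul_comm (residue R b), hne_ab, hne_ba', hne_b'a, ht0, hαα,
    hbb]

end IsLocalRing

theorem jacobsonGraph_localRing_longest_induced_general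
    (R : Type*) [CommRing R] [IsLocalRing R]
    (hm : IsLocalRing.maximalIdeal R ≠ ⊥)
    (hF : 4 ≤ Nat.card (IsLocalRing.ResidueField R)) :
    (∃ (u v : {x : R // x ∉ Ideal.jacobson (⊥ : Ideal R)})
      (p : (jacobsonGraph R).Walk u v), IsInducedPath p ∧ p.length = 2) ∧
    (∀ (u v : {x : R // x ∉ Ideal.jacobson (⊥ : Ideal R)})
      (p : (jacobsonGraph R).Walk u v), IsInducedPath p → p.length ≤ 2) ∧
    (∃ (u : {x : R // x ∉ Ideal.jacobson (⊥ : Ideal R)})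
      (p : (jacobsonGraph R).Walk u u), IsInducedCycle p ∧ p.length = 4) ∧
    (∀ (u : {x : R // x ∉ Ideal.jacobson (⊥ : Ideal R)})
      (p : (jacobsonGraph R).Walk u u), IsInducedCycle p → p.length ≤ 4) := by
  obtain ⟨a, b, c, d, hab, hbc, hcd, hda, hac, hnac, hbd, hnbd⟩ :=
    IsLocalRing.jacobsonGraph_exists_chordless_square hm hF
  exact ⟨⟨a, c, SimpleGraph.exists_isInducedPath_length_two hab hbc hac hnac⟩,
    fun _ _ _ hp => hp.length_le_two IsLocalRing.jacobsonGraph_threeWalkClosed,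
    ⟨a, SimpleGraph.exists_isInducedCycle_length_four hab hbc hcd hda hac hnac hbd hnbd⟩,
    fun _ _ hp => hp.length_le_four IsLocalRing.jacobsonGraph_threeWalkClosed⟩

/-- For a finite commutative local ring R with maximal ideal m ≠ 0 and
residue field F with |F| ≥ 4, the longest induced path in the Jacobson graph has length 2
and the longest induced cycle has length 4. -/
theorem jacobsonGraph_localRing_longest_induced
    (R : Type*) [CommRing R] [Finite R] [IsLocalRing R]
    (hm : IsLocalRing.maximalIdeal R ≠ ⊥)
    (hF : 4 ≤ Nat.card (IsLocalRing.ResidueField R)) :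
    (∃ (u v : {x : R // x ∉ Ideal.jacobson (⊥ : Ideal R)})
      (p : (jacobsonGraph R).Walk u v), IsInducedPath p ∧ p.length = 2) ∧
    (∀ (u v : {x : R // x ∉ Ideal.jacobson (⊥ : Ideal R)})
      (p : (jacobsonGraph R).Walk u v), IsInducedPath p → p.length ≤ 2) ∧
    (∃ (u : {x : R // x ∉ Ideal.jacobson (⊥ : Ideal R)})
      (p : (jacobsonGraph R).Walk u u), IsInducedCycle p ∧ p.length = 4) ∧
    (∀ (u : {x : R // x ∉ Ideal.jacobson (⊥ : Ideal R)})
      (p : (jacobsonGraph R).Walk u u), IsInducedCycle p → p.length ≤ 4) :=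
  jacobsonGraph_localRing_longest_induced_general R hm hF
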